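/- Let X = {1,2} with multiplication defined by 1·1 = 2, 1·2 = 1, 2·1 = 2, 2·2 = 1 (table 2121). For any field K, let K[X] be the two-dimensional algebra with basis e₁, e₂ and multiplication eₓ · e_y = e_{x·y}. Let τ be the linear map with τ(e₁) = e₂ and τ(e₂) = e₁. Then (K[X], ·, τ) is multiplicative (τ(ab) = τ(a)τ(b) for all a, b) and Hom-associative (τ(a)(bc) = (ab)τ(c) for all a, b, c), but K[X] is not associative. -/
import Mathlib

/-- Magma algebra K[X] of the magma 2121 on {1,2}, realized as Fin 2 → K
    (coordinates with respect to the basis e₁, e₂; 1 ↦ index 0, 2 ↦ index 1).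
    Table: 1·1=2, 1·2=1, 2·1=2, 2·2=1, so
    μ(a,b) = (a₁b₂ + a₂b₂)·e₁ + (a₁b₁ + a₂b₁)·e₂. -/
def mu18 {K : Type*} [Field K] (a b : Fin 2 → K) : Fin 2 → K :=
  fun i => if i = 0 then a 0 * b 1 + a 1 * b 1 else a 0 * b 0 + a 1 * b 0

/-- The linear map τ with τ(e₁) = e₂ and τ(e₂) = e₁. -/
def tau18 {K : Type*} [Field K] (a : Fin 2 → K) : Fin 2 → K :=
  fun i => if i = 0 then a 1 else a 0

theorem stmt_18 {K : Type*} [Field K] :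
    (∀ a b : Fin 2 → K, tau18 (mu18 a b) = mu18 (tau18 a) (tau18 b)) ∧
    (∀ a b c : Fin 2 → K, mu18 (tau18 a) (mu18 b c) = mu18 (mu18 a b) (tau18 c)) ∧
    ¬ (∀ a b c : Fin 2 → K, mu18 (mu18 a b) c = mu18 a (mu18 b c)) := by
  refine ⟨?_, ?_, ?_⟩
  · intro a b; funext i
    fin_cases i <;> simp [mu18, tau18] <;> ring
  · intro a b c; funext i
    fin_cases i <;> simp [mu18, tau18] <;> ring
  · intro h
    have e1 : Fin 2 → K := fun i => if i = 0 then 1 else 0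
    have := congrFun (h (fun i => if i = 0 then (1:K) else 0)
      (fun i => if i = 0 then 1 else 0) (fun i => if i = 0 then 1 else 0)) 0
    simp [mu18] at this
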